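/- arXiv:1904.09826 — 4 statements merged into one kernel-verified Lean document; each statement's English description precedes it below -/
import Mathlib

section
/- Let B be the backward shift on λ_p(A) for a Köthe matrix A, 1 ≤ p < ∞. Then B maps λ_p(A) into itself and is continuous if and only if for every n ∈ ℕ there exists m > n such that sup_{j∈ℕ} |a_{j,n} / a_{j+1,m}| < ∞ (with the convention that a_{j+1,m} = 0 forces a_{j,n} = 0 and 0/0 is read as 1). -/
open Filter Topology

noncomputable section

/-- A Köthe matrix: nonnegative entries, nondecreasing in the second index,
and for every row some positive entry. -/
def IsKotheMatrix (a : ℕ → ℕ → ℝ) : Prop :=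
  (∀ j k, 0 ≤ a j k) ∧ (∀ j k, a j k ≤ a j (k + 1)) ∧ (∀ j, ∃ k, 0 < a j k)

/-- The `k`-th seminorm on the Köthe sequence space `λ_p(A)` (for `1 ≤ p < ∞`). -/
noncomputable def kSeminorm (a : ℕ → ℕ → ℝ) (p : ℝ) (x : ℕ → ℝ) (k : ℕ) : ℝ :=
  (∑' j : ℕ, |x j * a j k| ^ p) ^ (1 / p)

/-- The Köthe sequence space `λ_p(A)` for `1 ≤ p < ∞`. -/
def lambdaP (a : ℕ → ℕ → ℝ) (p : ℝ) : Set (ℕ → ℝ) :=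
  {x | ∀ k : ℕ, Summable fun j : ℕ => |x j * a j k| ^ p}

/-- The standard translation-invariant Fréchet metric on `λ_p(A)`:
`d(x,y) = ∑_{n≥1} 2^{-n} ‖x-y‖_n / (1 + ‖x-y‖_n)`. -/
noncomputable def kDist (a : ℕ → ℕ → ℝ) (p : ℝ) (x y : ℕ → ℝ) : ℝ :=
  ∑' n : ℕ, (1 / 2 : ℝ) ^ (n + 1) *
    (kSeminorm a p (x - y) (n + 1) / (1 + kSeminorm a p (x - y) (n + 1)))

/-- The backward shift `B(x₁, x₂, x₃, …) = (x₂, x₃, x₄, …)` (0-based). -/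
def bShift (x : ℕ → ℝ) : ℕ → ℝ := fun j => x (j + 1)

/-- The front truncation `x(k, n) = (x_{k+1}, …, x_{k+n}, 0, 0, …)`. -/
def frontPart (x : ℕ → ℝ) (k n : ℕ) : ℕ → ℝ := fun i => if i < n then x (k + i) else 0

/-- The tail `x[k, n] = (0, …, 0 (n zeros), x_{k+n+1}, x_{k+n+2}, …)`. -/
def tailPart (x : ℕ → ℝ) (k n : ℕ) : ℕ → ℝ := fun i => if i < n then 0 else x (k + i)

open scoped Classical in
/-- `Φ^{(n)}_{x,y}(t) = |{0 ≤ i < n : d(f^i(x), f^i(y)) < t}|`. -/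
noncomputable def PhiN {X : Type*} (d : X → X → ℝ) (f : X → X) (x y : X) (n : ℕ) (t : ℝ) : ℕ :=
  ((Finset.range n).filter fun i => d (f^[i] x) (f^[i] y) < t).card

/-- The lower distributional function `Φ_{x,y}(t)`. -/
noncomputable def PhiLow {X : Type*} (d : X → X → ℝ) (f : X → X) (x y : X) (t : ℝ) : ℝ :=
  Filter.liminf (fun n : ℕ => (PhiN d f x y n t : ℝ) / n) Filter.atTop

/-- The upper distributional function `Φ*_{x,y}(t)`. -/
noncomputable def PhiUp {X : Type*} (d : X → X → ℝ) (f : X → X) (x y : X) (t : ℝ) : ℝ :=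
  Filter.limsup (fun n : ℕ => (PhiN d f x y n t : ℝ) / n) Filter.atTop

open scoped Classical in
/-- `|{0 ≤ i < n : d(f^i(x), f^i(y)) ≥ t}|`. -/
noncomputable def PhiNge {X : Type*} (d : X → X → ℝ) (f : X → X) (x y : X) (n : ℕ) (t : ℝ) : ℕ :=
  ((Finset.range n).filter fun i => t ≤ d (f^[i] x) (f^[i] y)).card

/-! ### Auxiliary lemmas for stmt_4 -/

/-- The sequence with a single possibly-nonzero entry `t` in position `j`. -/
noncomputable def ksingle (j : ℕ) (t : ℝ) : ℕ → ℝ := fun i => if i = j then t else 0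

section AuxKothe

variable (a : ℕ → ℕ → ℝ) (p : ℝ)

lemma ksem_nonneg (x : ℕ → ℝ) (k : ℕ) : 0 ≤ kSeminorm a p x k :=
  Real.rpow_nonneg (tsum_nonneg fun j => Real.rpow_nonneg (abs_nonneg _) p) _

lemma summable_kdist (x y : ℕ → ℝ) :
    Summable (fun n : ℕ => (1/2:ℝ)^(n+1) *
      (kSeminorm a p (x - y) (n+1) / (1 + kSeminorm a p (x - y) (n+1)))) := by
  have hgeo : Summable fun n : ℕ => ((1:ℝ)/2)^(n+1) := by
    simp only [pow_succ]
    exact (summable_geometric_of_lt_one (by norm_num) (by norm_num)).mul_right _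
  refine Summable.of_nonneg_of_le (fun n => ?_) (fun n => ?_) hgeo
  · have h := ksem_nonneg a p (x - y) (n+1)
    positivity
  · have h := ksem_nonneg a p (x - y) (n+1)
    have h2 : kSeminorm a p (x - y) (n+1) / (1 + kSeminorm a p (x - y) (n+1)) ≤ 1 := by
      rw [div_le_one (by linarith)]; linarith
    nlinarith [pow_nonneg (by norm_num : (0:ℝ) ≤ 1/2) (n+1)]

lemma tsum_half_pow : ∑' n : ℕ, ((1:ℝ)/2)^(n+1) = 1 := by
  simp only [pow_succ]
  rw [tsum_mul_right, tsum_geometric_of_lt_one (by norm_num) (by norm_num)]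
  norm_num

lemma seminorm_lt_of_kdist_lt {x y : ℕ → ℝ} {k : ℕ} {δ : ℝ} (hδ : 0 < δ)
    (h : kDist a p x y < (1/2)^(k+1) * (δ/(1+δ))) : kSeminorm a p (x - y) (k+1) < δ := by
  set s := kSeminorm a p (x - y) (k+1) with hs
  have hs0 : 0 ≤ s := ksem_nonneg a p _ _
  have hterm : (1/2:ℝ)^(k+1) * (s/(1+s)) ≤ kDist a p x y := by
    refine Summable.le_tsum (summable_kdist a p x y) k (fun j _ => ?_)
    have h0 := ksem_nonneg a p (x - y) (j+1)
    positivity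
  have hfrac : s/(1+s) < δ/(1+δ) := by
    have hlt := hterm.trans_lt h
    exact lt_of_mul_lt_mul_left hlt (by positivity)
  by_contra hge
  push_neg at hge
  have : δ/(1+δ) ≤ s/(1+s) := by
    rw [div_le_div_iff₀ (by linarith) (by linarith)]; nlinarith
  linarith

lemma kdist_le_bound {x y : ℕ → ℝ} {R : ℝ} {m : ℕ} (hR : 0 ≤ R)
    (h : ∀ k, k < m → kSeminorm a p (x - y) (k+1) ≤ R) :
    kDist a p x y ≤ R + (1/2)^m := by
  set f : ℕ → ℝ := fun n => (1/2:ℝ)^(n+1) *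
    (kSeminorm a p (x - y) (n+1) / (1 + kSeminorm a p (x - y) (n+1))) with hf
  have hsum := summable_kdist a p x y
  have hsplit : kDist a p x y = ∑ k ∈ Finset.range m, f k + ∑' k, f (k + m) :=
    (Summable.sum_add_tsum_nat_add m hsum).symm
  rw [hsplit]
  have hfle : ∀ n : ℕ, f n ≤ (1/2:ℝ)^(n+1) := by
    intro n
    have h0 := ksem_nonneg a p (x - y) (n+1)
    have h2 : kSeminorm a p (x - y) (n+1) / (1 + kSeminorm a p (x - y) (n+1)) ≤ 1 := by
      rw [div_le_one (by linarith)]; linarith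
    calc f n ≤ (1/2:ℝ)^(n+1) * 1 := mul_le_mul_of_nonneg_left h2 (by positivity)
      _ = (1/2:ℝ)^(n+1) := mul_one _
  refine add_le_add ?_ ?_
  · calc ∑ k ∈ Finset.range m, f k ≤ ∑ k ∈ Finset.range m, (1/2:ℝ)^(k+1) * R := by
          refine Finset.sum_le_sum (fun k hk => ?_)
          have hk' := Finset.mem_range.mp hk
          have h0 := ksem_nonneg a p (x - y) (k+1)
          have hfr : kSeminorm a p (x - y) (k+1) / (1 + kSeminorm a p (x - y) (k+1)) ≤ R :=
            le_trans (by rw [div_le_iff₀ (by linarith)]; nlinarith) (h k hk')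
          exact mul_le_mul_of_nonneg_left hfr (by positivity)
      _ = (∑ k ∈ Finset.range m, (1/2:ℝ)^(k+1)) * R := by rw [Finset.sum_mul]
      _ ≤ 1 * R := by
          refine mul_le_mul_of_nonneg_right ?_ hR
          have hle : ∑ k ∈ Finset.range m, ((1:ℝ)/2)^(k+1) ≤ ∑' k : ℕ, ((1:ℝ)/2)^(k+1) := by
            refine Summable.sum_le_tsum _ (fun k _ => by positivity) ?_
            simp only [pow_succ]
            exact (summable_geometric_of_lt_one (by norm_num) (by norm_num)).mul_right _
          rw [tsum_half_pow] at hle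
          exact hle
      _ = R := one_mul _
  · have hle : ∀ k : ℕ, f (k + m) ≤ (1/2:ℝ)^m * (1/2:ℝ)^(k+1) := by
      intro k
      calc f (k + m) ≤ (1/2:ℝ)^(k + m + 1) := hfle _
        _ = (1/2:ℝ)^m * (1/2:ℝ)^(k+1) := by ring
    calc (∑' k, f (k + m)) ≤ ∑' k : ℕ, (1/2:ℝ)^m * (1/2:ℝ)^(k+1) := by
          refine Summable.tsum_le_tsum hle ((summable_nat_add_iff m).mpr hsum) ?_
          refine Summable.mul_left _ ?_
          simp only [pow_succ]
          exact (summable_geometric_of_lt_one (by norm_num) (by norm_num)).mul_right _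
      _ = (1/2:ℝ)^m := by rw [tsum_mul_left, tsum_half_pow, mul_one]

end AuxKothe

lemma rpow_rpow_inv {p s : ℝ} (hs : 0 ≤ s) (hp : p ≠ 0) : (s ^ p) ^ (1/p : ℝ) = s := by
  rw [← Real.rpow_mul hs, mul_one_div_cancel hp, Real.rpow_one]

section AuxKothe2

variable (a : ℕ → ℕ → ℝ) {p : ℝ}

lemma ksem_single (hp : 0 < p) (ha : ∀ j k, 0 ≤ a j k) (j : ℕ) (t : ℝ) (k : ℕ) :
    kSeminorm a p (ksingle j t) k = |t| * a j k := by
  unfold kSeminorm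
  have htsum : (∑' i : ℕ, |ksingle j t i * a i k| ^ p) = |t * a j k| ^ p := by
    refine tsum_eq_single j (fun i hij => ?_) |>.trans ?_
    · simp [ksingle, hij, Real.zero_rpow hp.ne']
    · simp [ksingle]
  rw [htsum, ← Real.rpow_mul (abs_nonneg _), mul_one_div_cancel hp.ne', Real.rpow_one,
    abs_mul, abs_of_nonneg (ha j k)]

lemma ksingle_mem (hp : 0 < p) (j : ℕ) (t : ℝ) : ksingle j t ∈ lambdaP a p := by
  intro k
  refine summable_of_ne_finset_zero (s := {j}) (fun i hi => ?_)
  simp only [Finset.mem_singleton] at hi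
  simp [ksingle, hi, Real.zero_rpow hp.ne']

lemma zero_mem_lambdaP (hp : 0 < p) : (0 : ℕ → ℝ) ∈ lambdaP a p := by
  intro k
  have h0 : (fun j : ℕ => |(0 : ℕ → ℝ) j * a j k| ^ p) = fun _ => (0:ℝ) := by
    funext j; simp [Real.zero_rpow hp.ne']
  rw [h0]; exact summable_zero

lemma sub_mem_lambdaP (hp : 1 ≤ p) {x y : ℕ → ℝ} (hx : x ∈ lambdaP a p)
    (hy : y ∈ lambdaP a p) : x - y ∈ lambdaP a p := by
  intro k
  have hp0 : (0:ℝ) < p := lt_of_lt_of_le one_pos hp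
  refine Summable.of_nonneg_of_le (fun j => Real.rpow_nonneg (abs_nonneg _) _)
    (fun j => ?_) (((hx k).add (hy k)).mul_left ((2:ℝ)^p))
  have h1 : |(x - y) j * a j k| ≤ |x j * a j k| + |y j * a j k| := by
    have heq : (x - y) j * a j k = x j * a j k - y j * a j k := by
      simp [Pi.sub_apply, sub_mul]
    rw [heq]; exact abs_sub _ _
  set u := |x j * a j k|
  set v := |y j * a j k|
  have hu : 0 ≤ u := abs_nonneg _
  have hv : 0 ≤ v := abs_nonneg _
  calc |(x - y) j * a j k| ^ p ≤ (u + v) ^ p :=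
        Real.rpow_le_rpow (abs_nonneg _) h1 hp0.le
    _ ≤ (2 * max u v) ^ p := by
        refine Real.rpow_le_rpow (by linarith) ?_ hp0.le
        rcases le_total u v with h | h
        · rw [max_eq_right h]; linarith
        · rw [max_eq_left h]; linarith
    _ = 2 ^ p * (max u v) ^ p := Real.mul_rpow (by norm_num) (le_max_of_le_left hu)
    _ ≤ 2 ^ p * (u ^ p + v ^ p) := by
        refine mul_le_mul_of_nonneg_left ?_ (Real.rpow_nonneg (by norm_num) _)
        rcases max_cases u v with ⟨hm, _⟩ | ⟨hm, _⟩ <;> rw [hm]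
        · nlinarith [Real.rpow_nonneg hv p]
        · nlinarith [Real.rpow_nonneg hu p]

lemma bshift_summable' (hp : 0 < p) (ha : ∀ j k, 0 ≤ a j k) {x : ℕ → ℝ}
    (hx : x ∈ lambdaP a p) {k m : ℕ} {C : ℝ} (hC0 : 0 ≤ C)
    (hC : ∀ j, a j k ≤ C * a (j+1) m) :
    Summable fun j : ℕ => |bShift x j * a j k| ^ p := by
  have hsum : Summable fun j : ℕ => C^p * |x (j+1) * a (j+1) m| ^ p :=
    Summable.mul_left _ ((hx m).comp_injective (add_left_injective 1))
  refine Summable.of_nonneg_of_le (fun j => Real.rpow_nonneg (abs_nonneg _) _)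
    (fun j => ?_) hsum
  have h1 : |bShift x j * a j k| ≤ C * |x (j+1) * a (j+1) m| := by
    rw [abs_mul, abs_mul, abs_of_nonneg (ha j k), abs_of_nonneg (ha (j+1) m), bShift]
    calc |x (j+1)| * a j k ≤ |x (j+1)| * (C * a (j+1) m) :=
          mul_le_mul_of_nonneg_left (hC j) (abs_nonneg _)
      _ = C * (|x (j+1)| * a (j+1) m) := by ring
  calc |bShift x j * a j k| ^ p ≤ (C * |x (j+1) * a (j+1) m|) ^ p :=
        Real.rpow_le_rpow (abs_nonneg _) h1 hp.le
    _ = C^p * |x (j+1) * a (j+1) m| ^ p := Real.mul_rpow hC0 (abs_nonneg _)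

lemma ksem_mono (hp : 0 < p) (ha : ∀ j k, 0 ≤ a j k) (hmono : ∀ j, Monotone (a j))
    {x : ℕ → ℝ} (hx : x ∈ lambdaP a p) {k m : ℕ} (hkm : k ≤ m) :
    kSeminorm a p x k ≤ kSeminorm a p x m := by
  refine Real.rpow_le_rpow (tsum_nonneg fun j => Real.rpow_nonneg (abs_nonneg _) _)
    (Summable.tsum_le_tsum (fun j => ?_) (hx k) (hx m)) (by positivity)
  refine Real.rpow_le_rpow (abs_nonneg _) ?_ hp.le
  rw [abs_mul, abs_mul, abs_of_nonneg (ha j k), abs_of_nonneg (ha j m)]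
  exact mul_le_mul_of_nonneg_left (hmono j hkm) (abs_nonneg _)

lemma bshift_ksem_le (hp : 0 < p) (ha : ∀ j k, 0 ≤ a j k) {x : ℕ → ℝ}
    (hx : x ∈ lambdaP a p) {k m : ℕ} {C : ℝ} (hC0 : 0 ≤ C)
    (hC : ∀ j, a j k ≤ C * a (j+1) m) :
    kSeminorm a p (bShift x) k ≤ C * kSeminorm a p x m := by
  have hshift : Summable fun j : ℕ => |x (j+1) * a (j+1) m| ^ p :=
    (hx m).comp_injective (add_left_injective 1)
  have h1 : (∑' j : ℕ, |bShift x j * a j k| ^ p) ≤ C^p * ∑' j : ℕ, |x j * a j m| ^ p := by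
    have step1 : (∑' j : ℕ, |bShift x j * a j k| ^ p)
        ≤ ∑' j : ℕ, C^p * |x (j+1) * a (j+1) m| ^ p := by
      refine Summable.tsum_le_tsum (fun j => ?_) (bshift_summable' a hp ha hx hC0 hC)
        (hshift.mul_left _)
      have hj1 : |bShift x j * a j k| ≤ C * |x (j+1) * a (j+1) m| := by
        rw [abs_mul, abs_mul, abs_of_nonneg (ha j k), abs_of_nonneg (ha (j+1) m), bShift]
        calc |x (j+1)| * a j k ≤ |x (j+1)| * (C * a (j+1) m) :=
              mul_le_mul_of_nonneg_left (hC j) (abs_nonneg _)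
          _ = C * (|x (j+1)| * a (j+1) m) := by ring
      calc |bShift x j * a j k| ^ p ≤ (C * |x (j+1) * a (j+1) m|) ^ p :=
            Real.rpow_le_rpow (abs_nonneg _) hj1 hp.le
        _ = C^p * |x (j+1) * a (j+1) m| ^ p := Real.mul_rpow hC0 (abs_nonneg _)
    have step3 : (∑' j : ℕ, |x (j+1) * a (j+1) m| ^ p) ≤ ∑' j : ℕ, |x j * a j m| ^ p := by
      have hsplit := Summable.sum_add_tsum_nat_add 1 (hx m)
      have h0 : (0:ℝ) ≤ ∑ i ∈ Finset.range 1, |x i * a i m| ^ p :=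
        Finset.sum_nonneg fun i _ => Real.rpow_nonneg (abs_nonneg _) _
      linarith [hsplit]
    calc (∑' j : ℕ, |bShift x j * a j k| ^ p)
        ≤ ∑' j : ℕ, C^p * |x (j+1) * a (j+1) m| ^ p := step1
      _ = C^p * ∑' j : ℕ, |x (j+1) * a (j+1) m| ^ p := tsum_mul_left
      _ ≤ C^p * ∑' j : ℕ, |x j * a j m| ^ p :=
          mul_le_mul_of_nonneg_left step3 (Real.rpow_nonneg hC0 _)
  have hS0 : (0:ℝ) ≤ ∑' j : ℕ, |bShift x j * a j k| ^ p :=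
    tsum_nonneg fun j => Real.rpow_nonneg (abs_nonneg _) _
  have hS0' : (0:ℝ) ≤ ∑' j : ℕ, |x j * a j m| ^ p :=
    tsum_nonneg fun j => Real.rpow_nonneg (abs_nonneg _) _
  calc kSeminorm a p (bShift x) k
      = (∑' j : ℕ, |bShift x j * a j k| ^ p) ^ (1/p : ℝ) := rfl
    _ ≤ (C^p * ∑' j : ℕ, |x j * a j m| ^ p) ^ (1/p : ℝ) :=
        Real.rpow_le_rpow hS0 h1 (by positivity)
    _ = (C^p) ^ (1/p : ℝ) * (∑' j : ℕ, |x j * a j m| ^ p) ^ (1/p : ℝ) :=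
        Real.mul_rpow (Real.rpow_nonneg hC0 _) hS0'
    _ = C * kSeminorm a p x m := by rw [rpow_rpow_inv hC0 hp.ne']; rfl

end AuxKothe2

/-- the backward shift `B` maps `λ_p(A)` into itself and is continuous
(w.r.t. the metric `d`) iff for every `n` there is `m > n` with
`sup_j |a_{j,n}/a_{j+1,m}| < ∞` (convention: `a_{j+1,m} = 0` forces `a_{j,n} = 0`). -/
theorem stmt_4 (a : ℕ → ℕ → ℝ) (p : ℝ) (hA : IsKotheMatrix a) (hp : 1 ≤ p) :
    ((∀ x ∈ lambdaP a p, bShift x ∈ lambdaP a p) ∧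
      (∀ x ∈ lambdaP a p, ∀ ε : ℝ, 0 < ε → ∃ η : ℝ, 0 < η ∧
        ∀ y ∈ lambdaP a p, kDist a p x y < η → kDist a p (bShift x) (bShift y) < ε)) ↔
    (∀ n : ℕ, ∃ m : ℕ, n < m ∧ ∃ C : ℝ, ∀ j : ℕ, a j n ≤ C * a (j + 1) m) := by
  obtain ⟨ha, hstep, -⟩ := hA
  have hp0 : (0:ℝ) < p := lt_of_lt_of_le one_pos hp
  have hmono : ∀ j, Monotone (a j) := fun j => monotone_nat_of_le_succ (hstep j)
  constructor
  · rintro ⟨-, hcont⟩ n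
    obtain ⟨η, hη, hc⟩ := hcont 0 (zero_mem_lambdaP a hp0)
      ((1/2)^(n+1) * ((1:ℝ)/(1+1))) (by positivity)
    obtain ⟨N, hN⟩ := exists_pow_lt_of_lt_one (half_pos hη) (by norm_num : (1:ℝ)/2 < 1)
    set m := max N (n+1) with hmdef
    have hm2 : ((1:ℝ)/2)^m < η/2 :=
      lt_of_le_of_lt (pow_le_pow_of_le_one (by norm_num) (by norm_num) (le_max_left _ _)) hN
    have hmn : n < m := lt_of_lt_of_le (Nat.lt_succ_self n) (le_max_right _ _)
    refine ⟨m, hmn, 4/η, fun j => ?_⟩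
    have hzs : ∀ t : ℝ, (0 : ℕ → ℝ) - ksingle (j+1) t = ksingle (j+1) (-t) := by
      intro t; funext i; by_cases h : i = j + 1 <;> simp [ksingle, h]
    have hbs : ∀ t : ℝ, bShift 0 - bShift (ksingle (j+1) t) = ksingle j (-t) := by
      intro t; funext i; by_cases h : i = j <;> simp [bShift, ksingle, h]
    have hkey1 : ∀ t : ℝ, kDist a p 0 (ksingle (j+1) t) ≤ |t| * a (j+1) m + (1/2)^m := by
      intro t
      refine kdist_le_bound a p (mul_nonneg (abs_nonneg _) (ha _ _)) (fun k hk => ?_)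
      rw [hzs t, ksem_single a hp0 ha, abs_neg]
      exact mul_le_mul_of_nonneg_left (hmono (j+1) (Nat.succ_le_of_lt hk)) (abs_nonneg _)
    have hkey2 : ∀ t : ℝ, kDist a p 0 (ksingle (j+1) t) < η → |t| * a j (n+1) < 1 := by
      intro t hd
      have h2 := hc (ksingle (j+1) t) (ksingle_mem a hp0 _ _) hd
      have h3 := seminorm_lt_of_kdist_lt a p (δ := (1:ℝ)) one_pos h2
      rwa [hbs t, ksem_single a hp0 ha, abs_neg] at h3
    rcases (ha (j+1) m).eq_or_lt with hz | hpos
    · have han1 : a j (n+1) = 0 := by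
        by_contra hne
        have hpos' : 0 < a j (n+1) := (ha j (n+1)).lt_of_ne (Ne.symm hne)
        have hd : kDist a p 0 (ksingle (j+1) (2 / a j (n+1))) < η := by
          refine lt_of_le_of_lt (hkey1 _) ?_
          rw [← hz, mul_zero, zero_add]; linarith
        have h5 := hkey2 _ hd
        rw [abs_of_pos (by positivity), div_mul_cancel₀ _ hpos'.ne'] at h5
        linarith
      have h6 : a j n ≤ 0 := le_trans (hmono j (Nat.le_succ n)) han1.le
      rw [← hz, mul_zero]; exact h6
    · set A := a (j+1) m with hA'
      set t := η / (4 * A) with ht'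
      have ht : 0 < t := by positivity
      have hd : kDist a p 0 (ksingle (j+1) t) < η := by
        refine lt_of_le_of_lt (hkey1 t) ?_
        rw [abs_of_pos ht]
        have htA : t * A = η/4 := by
          rw [ht']; field_simp
        rw [htA]; linarith
      have h5 := hkey2 t hd
      rw [abs_of_pos ht] at h5
      have h6 : a j n ≤ a j (n+1) := hmono j (Nat.le_succ n)
      have h7 : a j (n+1) < 1/t := by
        rw [lt_div_iff₀ ht, mul_comm]
        exact h5
      have h8 : (1:ℝ)/t = 4/η * A := by
        rw [ht', one_div_div, div_mul_eq_mul_div]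
      rw [h8] at h7
      linarith
  · intro H
    choose mf hmf Cf hCf using H
    have hCf' : ∀ n j, a j n ≤ max (Cf n) 0 * a (j+1) (mf n) := fun n j =>
      le_trans (hCf n j)
        (mul_le_mul_of_nonneg_right (le_max_left (Cf n) 0) (ha (j+1) (mf n)))
    have hC0 : ∀ n, 0 ≤ max (Cf n) 0 := fun n => le_max_right _ _
    constructor
    · intro x hx k
      exact bshift_summable' a hp0 ha hx (hC0 k) (hCf' k)
    · intro x hx ε hε
      obtain ⟨N, hN⟩ := exists_pow_lt_of_lt_one (half_pos hε) (by norm_num : (1:ℝ)/2 < 1)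
      set M := (Finset.range (N+1)).sup mf with hM
      have hMge : ∀ k, k ≤ N → mf k ≤ M := fun k hk =>
        Finset.le_sup (Finset.mem_range.mpr (Nat.lt_succ_of_le hk))
      have hM1 : 1 ≤ M := le_trans (Nat.succ_le_of_lt (hmf 0)) (hMge 0 (Nat.zero_le N))
      set Cs := ∑ i ∈ Finset.range (N+1), max (Cf i) 0 with hCs
      have hCs0 : 0 ≤ Cs := Finset.sum_nonneg fun i _ => le_max_right _ _
      have hCsge : ∀ k, k ≤ N → max (Cf k) 0 ≤ Cs := fun k hk =>
        Finset.single_le_sum (fun i _ => le_max_right (Cf i) 0)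
          (Finset.mem_range.mpr (Nat.lt_succ_of_le hk))
      set δ := ε / (2 * (Cs + 1)) with hδdef
      have hδ : 0 < δ := by positivity
      refine ⟨(1/2)^M * (δ/(1+δ)), by positivity, fun y hy hxy => ?_⟩
      have hzmem : x - y ∈ lambdaP a p := sub_mem_lambdaP a hp hx hy
      have hρM : kSeminorm a p (x - y) M < δ := by
        have hM' : M - 1 + 1 = M := Nat.succ_pred_eq_of_pos hM1
        have h9 := seminorm_lt_of_kdist_lt a p (x := x) (y := y) (k := M - 1) hδ
          (by rw [hM']; exact hxy)
        rwa [hM'] at h9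
      have hBsub : bShift x - bShift y = bShift (x - y) := rfl
      have hbound : kDist a p (bShift x) (bShift y) ≤ Cs * δ + (1/2)^N := by
        refine kdist_le_bound a p (mul_nonneg hCs0 hδ.le) (fun k hk => ?_)
        rw [hBsub]
        have hk1 : k + 1 ≤ N := Nat.succ_le_of_lt hk
        calc kSeminorm a p (bShift (x - y)) (k+1)
            ≤ max (Cf (k+1)) 0 * kSeminorm a p (x - y) (mf (k+1)) :=
              bshift_ksem_le a hp0 ha hzmem (hC0 (k+1)) (hCf' (k+1))
          _ ≤ Cs * δ := by
              refine mul_le_mul (hCsge (k+1) hk1) ?_ (ksem_nonneg a p _ _) hCs0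
              exact le_trans (ksem_mono a hp0 ha hmono hzmem (hMge (k+1) hk1)) hρM.le
      have hfinal : Cs * δ < ε/2 := by
        rw [hδdef]
        have heq : Cs * (ε / (2 * (Cs + 1))) = Cs * ε / (2 * (Cs + 1)) := by ring
        rw [heq, div_lt_iff₀ (by positivity)]
        nlinarith
      have h10 : ((1:ℝ)/2)^N < ε/2 := hN
      linarith
end
end

section
/- Let y ∈ λ_p(A) for a Köthe matrix A and 1 ≤ p < ∞, and let (M_k) be a strictly increasing sequence of natural numbers such that ∑_{j=M_k}^∞ |y_j a_{j,k}|^p < 2^{-k} for each k. Define ν by ν_j = k·|y_j| for M_{4k} < j ≤ M_{4k+3} (k ∈ ℕ) and ν_j = 0 otherwise. Then ν ∈ λ_p(A), i.e., ∑_j |ν_j a_{j,k}|^p < ∞ for every k. -/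
open Filter Topology

noncomputable section

/-- the sequence `ν` defined by `ν_j = k·|y_j|` on the blocks
`M_{4k} < j ≤ M_{4k+3}` and `0` elsewhere belongs to `λ_p(A)`. -/
theorem stmt_5 (a : ℕ → ℕ → ℝ) (p : ℝ) (hA : IsKotheMatrix a) (hp : 1 ≤ p)
    (y : ℕ → ℝ) (hy : y ∈ lambdaP a p) (M : ℕ → ℕ) (hM : StrictMono M)
    (htail : ∀ k : ℕ, ∑' j : ℕ, |y (M k + j) * a (M k + j) k| ^ p < (1 / 2 : ℝ) ^ k)
    (ν : ℕ → ℝ)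
    (hν1 : ∀ k : ℕ, 1 ≤ k → ∀ j : ℕ, M (4 * k) < j → j ≤ M (4 * k + 3) →
      ν j = (k : ℝ) * |y j|)
    (hν0 : ∀ j : ℕ, (∀ k : ℕ, 1 ≤ k → ¬(M (4 * k) < j ∧ j ≤ M (4 * k + 3))) → ν j = 0) :
    ν ∈ lambdaP a p := by
  have ha_nonneg := hA.1
  have ha_mono : ∀ j, Monotone (a j) := fun j => monotone_nat_of_le_succ (fun k => hA.2.1 j k)
  intro k
  classical
  set K := max k 1 with hKdef
  have hK1 : 1 ≤ K := le_max_right _ _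
  have hKk : k ≤ K := le_max_left _ _
  set n0 := ⌈p⌉₊ with hn0
  set b : ℕ → ℝ := fun m => (m : ℝ) ^ n0 * (1/16 : ℝ) ^ m with hb
  have hb_nonneg : ∀ m, 0 ≤ b m := by intro m; positivity
  have hb_sum : Summable b :=
    summable_pow_mul_geometric_of_norm_lt_one (R := ℝ) n0 (r := (1/16 : ℝ))
      (by rw [Real.norm_eq_abs, abs_of_nonneg (by norm_num : (0:ℝ) ≤ 1/16)]; norm_num)
  set f : ℕ → ℝ := fun j => |ν j * a j k| ^ p with hf
  have hf_nonneg : ∀ j, 0 ≤ f j := fun j => Real.rpow_nonneg (abs_nonneg _) _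
  set J := M (4 * K) with hJ
  apply summable_of_sum_range_le (c := (∑ j ∈ Finset.range (J+1), f j) + ∑' m, b m) hf_nonneg
  intro n
  set T : ℕ → Finset ℕ := fun m =>
    (Finset.range n).filter (fun j => J < j ∧ M (4*m) < j ∧ j ≤ M (4*m+3)) with hT
  -- block sums
  have hblock : ∀ m, ∑ j ∈ T m, f j ≤ b m := by
    intro m
    rcases lt_or_ge m K with hmK | hmK
    · have : T m = ∅ := by
        rw [Finset.eq_empty_iff_forall_notMem]
        intro j hj
        simp only [hT, Finset.mem_filter] at hj
        have h1 : (4*m+3 : ℕ) < 4*K := by omega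
        have := hM h1
        omega
      rw [this, Finset.sum_empty]
      exact hb_nonneg m
    · have hm1 : 1 ≤ m := le_trans hK1 hmK
      have hk4m : k ≤ 4*m := by omega
      set W := M (4*m) with hW
      set g : ℕ → ℝ := fun i => |y (W + i) * a (W + i) (4*m)| ^ p with hg
      have hg_nonneg : ∀ i, 0 ≤ g i := fun i => Real.rpow_nonneg (abs_nonneg _) _
      have hg_sum : Summable g := by
        have : Summable (fun j => |y j * a j (4*m)| ^ p) := hy (4*m)
        exact this.comp_injective (fun i i' h => by omega)
      have hg_tsum : ∑' i, g i ≤ (1/2 : ℝ) ^ (4*m) := (htail (4*m)).le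
      have key : ∀ j ∈ T m, f j ≤ (m : ℝ) ^ p * g (j - W) := by
        intro j hj
        simp only [hT, Finset.mem_filter] at hj
        obtain ⟨-, -, h1, h2⟩ := hj
        have hν : ν j = (m : ℝ) * |y j| := hν1 m hm1 j h1 h2
        have hWj : W + (j - W) = j := by omega
        have habs : ∀ k' : ℕ, |y j * a j k'| = |y j| * a j k' := fun k' => by
          rw [abs_mul, abs_of_nonneg (ha_nonneg j k')]
        have e1 : |ν j * a j k| = (m : ℝ) * |y j * a j k| := by
          rw [hν, abs_mul, abs_mul, abs_abs, Nat.abs_cast,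
            abs_of_nonneg (ha_nonneg j k), habs, mul_assoc]
        have e2 : |y j * a j k| ≤ |y j * a j (4*m)| := by
          rw [habs, habs]
          exact mul_le_mul_of_nonneg_left (ha_mono j hk4m) (abs_nonneg _)
        have e3 : |y j * a j k| ^ p ≤ |y j * a j (4*m)| ^ p :=
          Real.rpow_le_rpow (abs_nonneg _) e2 (by linarith)
        have : f j = (m : ℝ) ^ p * |y j * a j k| ^ p := by
          rw [hf]; simp only
          rw [e1, Real.mul_rpow (Nat.cast_nonneg m) (abs_nonneg _)]
        rw [this, hg]
        simp only [hWj]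
        exact mul_le_mul_of_nonneg_left e3 (Real.rpow_nonneg (Nat.cast_nonneg m) p)
      calc ∑ j ∈ T m, f j ≤ ∑ j ∈ T m, (m : ℝ) ^ p * g (j - W) := Finset.sum_le_sum key
        _ = (m : ℝ) ^ p * ∑ j ∈ T m, g (j - W) := by rw [Finset.mul_sum]
        _ ≤ (m : ℝ) ^ p * (1/2 : ℝ) ^ (4*m) := by
            apply mul_le_mul_of_nonneg_left _ (Real.rpow_nonneg (Nat.cast_nonneg m) p)
            have hinj : Set.InjOn (fun j => j - W) (T m) := by
              intro x₁ hx₁ x₂ hx₂ hxy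
              simp only [hT, Finset.coe_filter, Set.mem_setOf_eq, Finset.mem_range] at hx₁ hx₂
              simp only at hxy
              omega
            rw [← Finset.sum_image (f := g) (fun u hu v hv h => hinj hu hv h)]
            exact le_trans (Summable.sum_le_tsum _ (fun i _ => hg_nonneg i) hg_sum) hg_tsum
        _ ≤ b m := by
            have hm1' : (1 : ℝ) ≤ (m : ℝ) := by exact_mod_cast hm1
            have hpn : (m : ℝ) ^ p ≤ (m : ℝ) ^ n0 := by
              rw [← Real.rpow_natCast (m : ℝ) n0]
              exact Real.rpow_le_rpow_of_exponent_le hm1' (Nat.le_ceil p)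
            have h2 : ((1:ℝ)/2) ^ (4*m) = ((1:ℝ)/16) ^ m := by
              rw [pow_mul]; norm_num
            rw [hb]
            simp only
            rw [← h2]
            exact mul_le_mul_of_nonneg_right hpn (by positivity)
  -- decomposition of the partial sum
  have hsplit : ∑ j ∈ Finset.range n, f j
      = ∑ j ∈ (Finset.range n).filter (fun j => j ≤ J), f j
        + ∑ j ∈ (Finset.range n).filter (fun j => ¬ j ≤ J), f j :=
    (Finset.sum_filter_add_sum_filter_not _ _ _).symm
  have h1 : ∑ j ∈ (Finset.range n).filter (fun j => j ≤ J), f j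
      ≤ ∑ j ∈ Finset.range (J+1), f j := by
    apply Finset.sum_le_sum_of_subset_of_nonneg
    · intro j hj
      simp only [Finset.mem_filter, Finset.mem_range] at hj ⊢
      omega
    · intro j _ _; exact hf_nonneg j
  have hdisj : (↑(Finset.range n) : Set ℕ).PairwiseDisjoint T := by
    intro m _ m' _ hmm'
    apply Finset.disjoint_left.2
    intro j hj hj'
    simp only [hT, Finset.mem_filter] at hj hj'
    rcases lt_or_gt_of_ne hmm' with h | h
    · have : (4*m+3 : ℕ) < 4*m' := by omega
      have := hM this
      omega
    · have : (4*m'+3 : ℕ) < 4*m := by omega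
      have := hM this
      omega
  have h2 : ∑ j ∈ (Finset.range n).filter (fun j => ¬ j ≤ J), f j
      ≤ ∑ m ∈ Finset.range n, ∑ j ∈ T m, f j := by
    rw [← Finset.sum_biUnion hdisj]
    rw [← Finset.sum_filter_ne_zero ((Finset.range n).filter (fun j => ¬ j ≤ J))]
    apply Finset.sum_le_sum_of_subset_of_nonneg
    · intro j hj
      simp only [Finset.mem_filter, Finset.mem_range] at hj
      obtain ⟨⟨hjn, hjJ⟩, hfj⟩ := hj
      have hνj : ν j ≠ 0 := by
        intro h
        apply hfj
        rw [hf]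
        simp only [h, zero_mul, abs_zero]
        exact Real.zero_rpow (by linarith)
      have : ∃ m, 1 ≤ m ∧ M (4*m) < j ∧ j ≤ M (4*m+3) := by
        by_contra hcon
        push_neg at hcon
        exact hνj (hν0 j (fun m hm hblk => absurd hblk.2 (not_le_of_gt (hcon m hm hblk.1))))
      obtain ⟨m, hm1, hmj1, hmj2⟩ := this
      have hmn : m < n := by
        have h4 : 4*m ≤ M (4*m) := hM.le_apply
        omega
      apply Finset.mem_biUnion.2
      exact ⟨m, Finset.mem_range.2 hmn, by
        simp only [hT, Finset.mem_filter, Finset.mem_range]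
        exact ⟨hjn, by omega, hmj1, hmj2⟩⟩
    · intro j _ _; exact hf_nonneg j
  have h3 : ∑ m ∈ Finset.range n, ∑ j ∈ T m, f j ≤ ∑' m, b m :=
    le_trans (Finset.sum_le_sum (fun m _ => hblock m))
      (Summable.sum_le_tsum _ (fun m _ => hb_nonneg m) hb_sum)
  linarith [hsplit, h1, h2, h3]
end
end

section
/- Given x, y ∈ λ_p(A) with lower distributional function Φ_{x,y}(δ) = 0 for the backward shift B and some δ > 0, there exists a strictly increasing sequence (M_k) ⊂ ℕ such that simultaneously: (i) M_{k+1} − M_k ≥ 4^{M_k} for all k; (ii) ∑_{j=M_k}^∞ |y_j a_{j,k}|^p < 2^{-k} for all k; and (iii) lim_{k→∞} (1/M_k)·|{0 ≤ i < M_k : d(B^i(x), B^i(y)) ≥ δ}| = 1. -/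
open Filter Topology

noncomputable section

/-! Since `Φ_{x,y}(δ) = 0`, the proportion of times `i < n` with `d(Bⁱx, Bⁱy) < δ` is below
`1/(k+1)` for infinitely many `n`, and the tails of the series `∑ |y_j a_{j,k}|^p` eventually lie
below `2^{-k}`. Choosing each `M_{k+1}` beyond `M_k + 4^{M_k}` among the infinitely many `n` meeting
both requirements gives the sequence, and the proportion of the complementary times tends to `1`. -/

section Distributional

variable {X : Type*} (d : X → X → ℝ) (f : X → X) (x y : X) (t : ℝ)

theorem PhiN_le (n : ℕ) : PhiN d f x y n t ≤ n :=
  (Finset.card_filter_le _ _).trans (Finset.card_range n).le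

theorem PhiN_add_PhiNge (n : ℕ) : PhiN d f x y n t + PhiNge d f x y n t = n := by
  classical
  unfold PhiN PhiNge
  simp_rw [← not_lt]
  convert Finset.card_filter_add_card_filter_not (s := Finset.range n) _
  exact (Finset.card_range n).symm

theorem PhiNge_div_eq_one_sub {n : ℕ} (hn : n ≠ 0) :
    (PhiNge d f x y n t : ℝ) / n = 1 - (PhiN d f x y n t : ℝ) / n := by
  have hsum : (PhiN d f x y n t : ℝ) + PhiNge d f x y n t = n := by
    exact_mod_cast PhiN_add_PhiNge d f x y t n
  field_simp
  linarith

theorem frequently_PhiN_div_lt_of_PhiLow_eq_zero (h : PhiLow d f x y t = 0) {ε : ℝ}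
    (hε : 0 < ε) : ∃ᶠ n in atTop, (PhiN d f x y n t : ℝ) / n < ε := by
  have hbdd : IsBoundedUnder (· ≤ ·) atTop fun n : ℕ => (PhiN d f x y n t : ℝ) / n :=
    isBoundedUnder_of ⟨1, fun n => div_le_one_of_le₀ (by exact_mod_cast PhiN_le d f x y t n)
      n.cast_nonneg⟩
  exact frequently_lt_of_liminf_lt hbdd.isCoboundedUnder_ge (h.symm ▸ hε : PhiLow d f x y t < ε)

end Distributional

theorem eventually_tsum_nat_add_lt (u : ℕ → ℝ) {ε : ℝ} (hε : 0 < ε) :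
    ∀ᶠ m in atTop, ∑' j, u (m + j) < ε := by
  filter_upwards [(tendsto_sum_nat_add u).eventually_lt_const hε] with m hm
  simpa only [Nat.add_comm m] using hm

theorem exists_seq_add_le_of_frequently {P : ℕ → ℕ → Prop} (h : ∀ k, ∃ᶠ m in atTop, P k m)
    (g : ℕ → ℕ) : ∃ M : ℕ → ℕ, (∀ k, M k + g (M k) ≤ M (k + 1)) ∧ ∀ k, P k (M k) := by
  choose s hs_ge hs_P using fun k => (h k).forall_exists_of_atTop
  let M : ℕ → ℕ := fun k => Nat.rec (s 0 0) (fun k Mk => s (k + 1) (Mk + g Mk)) k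
  refine ⟨M, fun k => hs_ge _ _, ?_⟩
  rintro (_ | k)
  exacts [hs_P 0 0, hs_P (k + 1) _]

theorem stmt_6_general (a : ℕ → ℕ → ℝ) (p : ℝ) (x y : ℕ → ℝ) (δ : ℝ)
    (hΦ : PhiLow (kDist a p) bShift x y δ = 0) :
    ∃ M : ℕ → ℕ, StrictMono M ∧
      (∀ k : ℕ, M k + 4 ^ (M k) ≤ M (k + 1)) ∧
      (∀ k : ℕ, ∑' j : ℕ, |y (M k + j) * a (M k + j) k| ^ p < (1 / 2 : ℝ) ^ k) ∧
      Tendsto (fun k : ℕ => (PhiNge (kDist a p) bShift x y (M k) δ : ℝ) / M k)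
        atTop (𝓝 1) := by
  set u : ℕ → ℝ := fun n => (PhiN (kDist a p) bShift x y n δ : ℝ) / n
  have hP : ∀ k : ℕ, ∃ᶠ m in atTop, u m < 1 / ((k : ℝ) + 1) ∧
      (0 < m ∧ ∑' j, |y (m + j) * a (m + j) k| ^ p < (1 / 2 : ℝ) ^ k) := fun k =>
    (frequently_PhiN_div_lt_of_PhiLow_eq_zero _ _ _ _ _ hΦ (by positivity)).and_eventually
      ((eventually_gt_atTop 0).and
        (eventually_tsum_nat_add_lt (fun j => |y j * a j k| ^ p) (by positivity)))
  obtain ⟨M, hgap, hM⟩ := exists_seq_add_le_of_frequently hP (4 ^ ·)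
  have hmono : StrictMono M := strictMono_nat_of_lt_succ fun k =>
    (Nat.lt_add_of_pos_right (by positivity)).trans_le (hgap k)
  have hu_lim : Tendsto (u ∘ M) atTop (𝓝 0) :=
    squeeze_zero (fun _ => div_nonneg (Nat.cast_nonneg _) (Nat.cast_nonneg _))
      (fun k => (hM k).1.le) tendsto_one_div_add_atTop_nhds_zero_nat
  refine ⟨M, hmono, hgap, fun k => (hM k).2.2, ?_⟩
  have hratio : ∀ k, (PhiNge (kDist a p) bShift x y (M k) δ : ℝ) / M k = 1 - u (M k) :=
    fun k => PhiNge_div_eq_one_sub _ _ _ _ _ (hM k).2.1.ne'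
  simpa only [hratio, Function.comp_apply, sub_zero] using hu_lim.const_sub 1

/-- from `Φ_{x,y}(δ) = 0` one extracts a strictly increasing `(M_k)` with
(i) `M_{k+1} - M_k ≥ 4^{M_k}`, (ii) `∑_{j=M_k}^∞ |y_j a_{j,k}|^p < 2^{-k}`, and
(iii) `(1/M_k)|{0 ≤ i < M_k : d(Bⁱx, Bⁱy) ≥ δ}| → 1`. -/
theorem stmt_6 (a : ℕ → ℕ → ℝ) (p : ℝ) (hA : IsKotheMatrix a) (hp : 1 ≤ p)
    (hcont : ∀ n : ℕ, ∃ m : ℕ, n < m ∧ ∃ C : ℝ, ∀ j : ℕ, a j n ≤ C * a (j + 1) m)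
    (x y : ℕ → ℝ) (hx : x ∈ lambdaP a p) (hy : y ∈ lambdaP a p)
    (δ : ℝ) (hδ : 0 < δ) (hΦ : PhiLow (kDist a p) bShift x y δ = 0) :
    ∃ M : ℕ → ℕ, StrictMono M ∧
      (∀ k : ℕ, M k + 4 ^ (M k) ≤ M (k + 1)) ∧
      (∀ k : ℕ, ∑' j : ℕ, |y (M k + j) * a (M k + j) k| ^ p < (1 / 2 : ℝ) ^ k) ∧
      Tendsto (fun k : ℕ => (PhiNge (kDist a p) bShift x y (M k) δ : ℝ) / M k)
        atTop (𝓝 1) :=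
  stmt_6_general a p x y δ hΦ
end
end

section
/- Tail smallness lemma: Let ν ∈ λ_p(A) be a sequence that vanishes outside the union of blocks (M_{4k}, M_{4k+3}] (k ∈ ℕ), where (M_k) satisfies M_{k+1} − M_k ≥ 4^{M_k}. Then there exists a subsequence (M_{k_n}) with k_{2n+1} = k_{2n} + 3 and {k_{2n}} ⊆ {4k : k ∈ ℕ} such that for all n and all M_{k_{2n−1}} < j ≤ M_{k_{2n−1}} + 2^{M_{k_{2n−1}}}, the tail satisfies d(0, ν[j, M_{k_{2n}} − 4^{M_{k_{2n−1}}}]) ≤ 1/(2n), where ν[j, m] = (0,…,0 (m zeros), ν_{j+m+1}, …). -/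
open Filter Topology

noncomputable section

lemma tail_small (a : ℕ → ℕ → ℝ) (p : ℝ) (hp : 1 ≤ p) (ν : ℕ → ℝ) (j : ℕ)
    {ε : ℝ} (hε : 0 < ε) :
    ∃ m₀ : ℕ, ∀ m, m₀ ≤ m → kDist a p 0 (tailPart ν j m) ≤ ε := by
  have hp0 : 0 < p := lt_of_lt_of_le one_pos hp
  set F : ℕ → ℕ → ℝ := fun k i => |ν (j + i) * a i (k + 1)| ^ p with hF
  have hF0 : ∀ k i, 0 ≤ F k i := fun k i => Real.rpow_nonneg (abs_nonneg _) p
  have hε2 : 0 < ε / 2 := by linarith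
  -- for each seminorm index, the truncated sum eventually small
  have key : ∀ k : ℕ, ∃ m₀ : ℕ, ∀ m, m₀ ≤ m →
      (∑' i : ℕ, (if i < m then 0 else F k i)) ≤ (ε / 2) ^ p := by
    intro k
    have hshift : ∀ m : ℕ, (∑' i : ℕ, (if i < m then 0 else F k i)) = ∑' i : ℕ, F k (i + m) := by
      intro m
      have hg : Function.Injective (fun c : ℕ => m + c) := add_right_injective m
      have hsupp : Function.support (fun i => if i < m then 0 else F k i) ⊆
          Set.range (fun c : ℕ => m + c) := by
        intro x hx
        simp only [Function.mem_support] at hx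
        by_cases h : x < m
        · simp [h] at hx
        · exact ⟨x - m, show m + (x - m) = x by omega⟩
      have := hg.tsum_eq (f := fun i => if i < m then 0 else F k i) hsupp
      rw [← this]
      apply tsum_congr
      intro c
      have : ¬ (m + c < m) := by omega
      simp [this, Nat.add_comm m c]
    have htend : Tendsto (fun m : ℕ => ∑' i : ℕ, F k (i + m)) atTop (𝓝 0) :=
      tendsto_sum_nat_add (F k)
    have hev : ∀ᶠ m in atTop, (∑' i : ℕ, F k (i + m)) ≤ (ε / 2) ^ p := by
      have hpos : (0:ℝ) < (ε / 2) ^ p := Real.rpow_pos_of_pos hε2 p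
      filter_upwards [htend.eventually (eventually_le_nhds hpos)] with m hm using hm
    obtain ⟨m₀, hm₀⟩ := hev.exists_forall_of_atTop
    exact ⟨m₀, fun m hm => by rw [hshift]; exact hm₀ m hm⟩
  choose m₀ hm₀ using key
  obtain ⟨N, hN⟩ := exists_pow_lt_of_lt_one hε2 (by norm_num : (1/2 : ℝ) < 1)
  refine ⟨(Finset.range N).sup m₀, fun m hm => ?_⟩
  set y := tailPart ν j m with hy
  set s : ℕ → ℝ := fun k => kSeminorm a p (0 - y) (k + 1) with hsdef
  -- inner tsum identification
  have hinner : ∀ k : ℕ, (∑' i : ℕ, |(0 - y) i * a i (k + 1)| ^ p)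
      = ∑' i : ℕ, (if i < m then 0 else F k i) := by
    intro k
    apply tsum_congr
    intro i
    have h0 : (0 - y) i = -(y i) := by simp [Pi.sub_apply]
    rw [h0, neg_mul, abs_neg]
    by_cases h : i < m
    · simp [hy, tailPart, h, Real.zero_rpow (ne_of_gt hp0)]
    · simp [hy, tailPart, h, hF]
  have hs0 : ∀ k, 0 ≤ s k :=
    fun k => Real.rpow_nonneg (tsum_nonneg fun i => Real.rpow_nonneg (abs_nonneg _) p) _
  have hsε : ∀ k < N, s k ≤ ε / 2 := by
    intro k hk
    have hmk : m₀ k ≤ m := le_trans (Finset.le_sup (Finset.mem_range.2 hk)) hm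
    have h1 : (∑' i : ℕ, |(0 - y) i * a i (k + 1)| ^ p) ≤ (ε / 2) ^ p := by
      rw [hinner k]; exact hm₀ k m hmk
    have h2 : s k ≤ ((ε / 2) ^ p) ^ (1 / p) := by
      rw [hsdef]
      exact Real.rpow_le_rpow (tsum_nonneg fun i => Real.rpow_nonneg (abs_nonneg _) p) h1
        (by positivity)
    rwa [one_div, Real.rpow_rpow_inv hε2.le (ne_of_gt hp0)] at h2
  -- bound the distance
  have hratio1 : ∀ k, s k / (1 + s k) ≤ 1 := by
    intro k
    rw [div_le_one (by linarith [hs0 k])]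
    linarith [hs0 k]
  have hratio0 : ∀ k, 0 ≤ s k / (1 + s k) :=
    fun k => div_nonneg (hs0 k) (by linarith [hs0 k])
  set g : ℕ → ℝ := fun n => (1/2 : ℝ) ^ (n + 1) * (if n < N then ε / 2 else 1) with hg
  have hterm : ∀ n, (1/2 : ℝ) ^ (n + 1) * (s n / (1 + s n)) ≤ g n := by
    intro n
    apply mul_le_mul_of_nonneg_left _ (by positivity)
    by_cases h : n < N
    · simp only [h, if_true]
      calc s n / (1 + s n) ≤ s n := div_le_self (hs0 n) (by linarith [hs0 n])
        _ ≤ ε / 2 := hsε n h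
    · simp only [h, if_false]; exact hratio1 n
  have hsum_c : Summable (fun n : ℕ => (1/2 : ℝ) ^ (n + 1)) := by
    exact (summable_geometric_two.mul_right (1/2)).congr fun n => (pow_succ _ _).symm
  have hsum_lhs : Summable (fun n : ℕ => (1/2 : ℝ) ^ (n + 1) * (s n / (1 + s n))) := by
    apply Summable.of_nonneg_of_le
      (fun n => mul_nonneg (by positivity) (hratio0 n)) (fun n => ?_) hsum_c
    calc (1/2 : ℝ) ^ (n + 1) * (s n / (1 + s n)) ≤ (1/2 : ℝ) ^ (n + 1) * 1 :=
          mul_le_mul_of_nonneg_left (hratio1 n) (by positivity)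
      _ = (1/2 : ℝ) ^ (n + 1) := mul_one _
  have hsum_g : Summable g := by
    apply Summable.of_nonneg_of_le (fun n => ?_) (fun n => ?_) (hsum_c.mul_right (1 + ε/2))
    · rw [hg]; dsimp only; split <;> positivity
    · rw [hg]; dsimp only
      apply mul_le_mul_of_nonneg_left _ (by positivity)
      split <;> [linarith; linarith]
  have hdist : kDist a p 0 y = ∑' n : ℕ, (1/2 : ℝ) ^ (n + 1) * (s n / (1 + s n)) := rfl
  rw [hdist]
  have h1 : (∑' n : ℕ, (1/2 : ℝ) ^ (n + 1) * (s n / (1 + s n))) ≤ ∑' n, g n :=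
    Summable.tsum_le_tsum hterm hsum_lhs hsum_g
  have hc_tsum : (∑' n : ℕ, (1/2 : ℝ) ^ (n + 1)) = 1 := by
    have : (∑' n : ℕ, (1/2 : ℝ) ^ (n + 1)) = (∑' n : ℕ, (1/2 : ℝ) ^ n * (1/2)) := by
      apply tsum_congr; intro n; rw [pow_succ]
    rw [this, tsum_mul_right, tsum_geometric_two]; norm_num
  have h2 : (∑' n, g n) ≤ ε := by
    have hsplit := Summable.sum_add_tsum_nat_add N hsum_g
    rw [← hsplit]
    have hA : (∑ n ∈ Finset.range N, g n) ≤ ε / 2 := by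
      have : ∀ n ∈ Finset.range N, g n = (1/2 : ℝ) ^ (n + 1) * (ε / 2) := by
        intro n hn
        rw [hg]; simp [Finset.mem_range.1 hn]
      rw [Finset.sum_congr rfl this, ← Finset.sum_mul]
      have : (∑ n ∈ Finset.range N, (1/2 : ℝ) ^ (n + 1)) ≤ 1 :=
        le_trans (Summable.sum_le_tsum _ (fun i _ => by positivity) hsum_c) hc_tsum.le
      nlinarith
    have hB : (∑' n : ℕ, g (n + N)) ≤ ε / 2 := by
      have heq : ∀ n : ℕ, g (n + N) = (1/2 : ℝ) ^ N * (1/2) ^ (n + 1) := by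
        intro n
        rw [hg]; dsimp only
        have : ¬ (n + N < N) := by omega
        rw [if_neg this, mul_one, ← pow_add]
        ring_nf
      calc (∑' n : ℕ, g (n + N)) = ∑' n : ℕ, (1/2 : ℝ) ^ N * (1/2) ^ (n + 1) :=
            tsum_congr heq
        _ = (1/2 : ℝ) ^ N * ∑' n : ℕ, (1/2 : ℝ) ^ (n + 1) := tsum_mul_left
        _ = (1/2 : ℝ) ^ N := by rw [hc_tsum, mul_one]
        _ ≤ ε / 2 := hN.le
    linarith
  linarith

/-- tail smallness lemma: for `ν` supported on the blocks
`(M_{4k}, M_{4k+3}]` with `M_{k+1} − M_k ≥ 4^{M_k}`, there is a subsequence `(M_{k_n})`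
with `k₁ = 1`, `k_{2n} ∈ 4ℕ`, `k_{2n+1} = k_{2n} + 3`, such that for all `n ≥ 1` and all
`M_{k_{2n−1}} < j ≤ M_{k_{2n−1}} + 2^{M_{k_{2n−1}}}`,
`d(0, ν[j, M_{k_{2n}} − 4^{M_{k_{2n−1}}}]) ≤ 1/(2n)`. -/
theorem stmt_19 (a : ℕ → ℕ → ℝ) (p : ℝ) (hA : IsKotheMatrix a) (hp : 1 ≤ p)
    (M : ℕ → ℕ) (hM : StrictMono M) (hgap : ∀ k : ℕ, M k + 4 ^ (M k) ≤ M (k + 1))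
    (ν : ℕ → ℝ) (hν : ν ∈ lambdaP a p)
    (hsupp : ∀ j : ℕ, (∀ k : ℕ, 1 ≤ k → ¬(M (4 * k) < j ∧ j ≤ M (4 * k + 3))) → ν j = 0) :
    ∃ ks : ℕ → ℕ, StrictMono ks ∧ ks 1 = 1 ∧
      (∀ n : ℕ, 1 ≤ n → ∃ m : ℕ, ks (2 * n) = 4 * m) ∧
      (∀ n : ℕ, 1 ≤ n → ks (2 * n + 1) = ks (2 * n) + 3) ∧
      (∀ n : ℕ, 1 ≤ n → ∀ j : ℕ,
        M (ks (2 * n - 1)) < j → j ≤ M (ks (2 * n - 1)) + 2 ^ (M (ks (2 * n - 1))) →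
        kDist a p 0 (tailPart ν j (M (ks (2 * n)) - 4 ^ (M (ks (2 * n - 1))))) ≤
          1 / (2 * (n : ℝ))) := by
  -- the step lemma: given a previous index `q` and threshold `tprev`, choose `t'` large
  have step : ∀ (q tprev : ℕ) (ε : ℝ), 0 < ε → ∃ t' : ℕ, tprev < t' ∧ q < 4 * t' ∧
      ∀ j : ℕ, M q < j → j ≤ M q + 2 ^ (M q) →
        kDist a p 0 (tailPart ν j (M (4 * t') - 4 ^ (M q))) ≤ ε := by
    intro q tprev ε hε
    choose w hw using fun j : ℕ => tail_small a p hp ν j hε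
    set B := (Finset.Icc (M q + 1) (M q + 2 ^ (M q))).sup w with hB
    have hpow : 1 ≤ 4 ^ (M q) := Nat.one_le_pow _ _ (by norm_num)
    refine ⟨tprev + q + B + 4 ^ (M q) + 1, by omega, by omega, ?_⟩
    intro j hj1 hj2
    apply hw j
    have hjB : w j ≤ B := Finset.le_sup (Finset.mem_Icc.2 ⟨by omega, hj2⟩)
    have hM4 : 4 * (tprev + q + B + 4 ^ (M q) + 1) ≤
        M (4 * (tprev + q + B + 4 ^ (M q) + 1)) := hM.le_apply
    omega
  choose f hf1 hf2 hf3 using step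
  have εpos : ∀ k : ℕ, (0 : ℝ) < 1 / (2 * ((k : ℝ) + 1)) := fun k => by positivity
  set t : ℕ → ℕ := fun n => Nat.rec 0 (fun k tk =>
    f (if k = 0 then 1 else 4 * tk + 3) tk (1 / (2 * ((k : ℝ) + 1))) (εpos k)) n with htdef
  set qq : ℕ → ℕ := fun k => if k = 0 then 1 else 4 * t k + 3 with hqqdef
  have ht0 : t 0 = 0 := rfl
  have htsucc : ∀ k, t (k + 1) =
      f (qq k) (t k) (1 / (2 * ((k : ℝ) + 1))) (εpos k) := fun k => rfl
  have htlt : ∀ k, t k < t (k + 1) := fun k => by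
    rw [htsucc k]; exact hf1 _ _ _ _
  have hqlt : ∀ k, qq k < 4 * t (k + 1) := fun k => by
    rw [htsucc k]; exact hf2 _ _ _ _
  have htail : ∀ k, ∀ j : ℕ, M (qq k) < j → j ≤ M (qq k) + 2 ^ (M (qq k)) →
      kDist a p 0 (tailPart ν j (M (4 * t (k + 1)) - 4 ^ (M (qq k)))) ≤
        1 / (2 * ((k : ℝ) + 1)) := fun k j h1 h2 => by
    rw [htsucc k]; exact hf3 _ _ _ _ j h1 h2
  set ks : ℕ → ℕ := fun i => if i = 0 then 0 else if i = 1 then 1 else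
    if i % 2 = 0 then 4 * t (i / 2) else 4 * t (i / 2) + 3 with hksdef
  have hks0 : ks 0 = 0 := rfl
  have hks1 : ks 1 = 1 := rfl
  have hkse : ∀ n, 1 ≤ n → ks (2 * n) = 4 * t n := by
    intro n hn
    have h0 : ¬(2 * n = 0) := by omega
    have h1 : ¬(2 * n = 1) := by omega
    have h2 : 2 * n % 2 = 0 := by omega
    have h3 : 2 * n / 2 = n := by omega
    rw [hksdef]
    simp only [if_neg h0, if_neg h1, if_pos h2, h3]
  have hkso : ∀ n, 1 ≤ n → ks (2 * n + 1) = 4 * t n + 3 := by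
    intro n hn
    have h0 : ¬(2 * n + 1 = 0) := by omega
    have h1 : ¬(2 * n + 1 = 1) := by omega
    have h2 : ¬((2 * n + 1) % 2 = 0) := by omega
    have h3 : (2 * n + 1) / 2 = n := by omega
    rw [hksdef]
    simp only [if_neg h0, if_neg h1, if_neg h2, h3]
  have ht1 : 1 ≤ t 1 := by have h := htlt 0; rw [ht0] at h; exact h
  refine ⟨ks, ?_, hks1, ?_, ?_, ?_⟩
  · -- strict monotonicity
    apply strictMono_nat_of_lt_succ
    intro i
    obtain ⟨n, rfl | rfl⟩ := Nat.even_or_odd' i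
    · -- i = 2n
      rcases Nat.eq_zero_or_pos n with rfl | hn
      · have e0 : ks (2 * 0) = 0 := rfl
        have e1 : ks (2 * 0 + 1) = 1 := rfl
        omega
      · rw [hkse n hn, hkso n hn]; omega
    · -- i = 2n+1
      rcases Nat.eq_zero_or_pos n with rfl | hn
      · -- ks 1 = 1 < ks 2 = 4 * t 1
        have h2 : ks (2 * 1) = 4 * t 1 := hkse 1 le_rfl
        simp only [Nat.mul_one] at h2 ⊢
        rw [show 2 * 0 + 1 + 1 = 2 by rfl, h2, hks1]
        omega
      · have hodd := hkso n hn
        have heven : ks (2 * (n + 1)) = 4 * t (n + 1) := hkse (n + 1) (by omega)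
        have hq : qq n = 4 * t n + 3 := by
          rw [hqqdef]; simp only [if_neg (by omega : ¬(n = 0))]
        have := hqlt n
        rw [hq] at this
        rw [show 2 * n + 1 + 1 = 2 * (n + 1) by ring, heven, hodd]
        omega
  · exact fun n hn => ⟨t n, hkse n hn⟩
  · intro n hn
    rw [hkso n hn, hkse n hn]
  · intro n hn j hj1 hj2
    have hq : ks (2 * n - 1) = qq (n - 1) := by
      rcases Nat.eq_or_lt_of_le hn with h | h
      · rw [← h]; rfl
      · have h2 : 2 * n - 1 = 2 * (n - 1) + 1 := by omega
        have hn1 : 1 ≤ n - 1 := by omega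
        rw [h2, hkso (n - 1) hn1, hqqdef]
        simp only [if_neg (by omega : ¬(n - 1 = 0))]
    have hk2 : ks (2 * n) = 4 * t n := hkse n hn
    have hn1 : n - 1 + 1 = n := by omega
    have hcast : ((n - 1 : ℕ) : ℝ) + 1 = (n : ℝ) := by
      have : (n - 1 : ℕ) + 1 = n := by omega
      exact_mod_cast congrArg (Nat.cast : ℕ → ℝ) this
    rw [hq] at hj1 hj2 ⊢
    rw [hk2]
    have := htail (n - 1) j hj1 hj2
    rw [hn1, hcast] at this
    exact this
end
end
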